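/- arXiv:1903.05046 — 2 statements merged into one kernel-verified Lean document; each statement's English description precedes it below -/
import Mathlib

section
/- Fix constants δ ∈ (0,1/2) and ε ∈ [0, 1/2]. There exists a constant C(δ) > 0 such that the following holds. Consider a sequence of instances indexed by p → ∞ with k ≤ p^{1/2−δ}, k/σ² ≥ C(δ), and n ≤ n*. Then E_{S ~ Hyp(p,k,k)}[ (1 − S/(k + σ²))^{−n} · 1{S ≤ εk} ] = 1 + o(1) as p → ∞. -/
open Filter Real Finset

noncomputable section

/-- The pmf of the hypergeometric distribution `Hyp(p,k,k)` at `s`: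
`ℙ(S = s) = C(k,s) C(p−k, k−s) / C(p,k)`. -/
def hypPMF (p k s : ℕ) : ℝ :=
  (k.choose s * (p - k).choose (k - s) : ℝ) / p.choose k

/-- The critical sample size `n* = 2k log(p/k) / log(1 + k/σ²)`. -/
def nstar (p k : ℕ) (σ : ℝ) : ℝ :=
  2 * k * Real.log ((p : ℝ) / (k : ℝ)) / Real.log (1 + (k : ℝ) / σ ^ 2)

namespace HypAux


lemma choose_step (m k j : ℕ) (hj : j + 1 ≤ k) (hk : k ≤ m) :
    (m - k + 1) * m.choose j ≤ k * m.choose (j + 1) := by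
  have h1 : m.choose (j + 1) * (j + 1) = m.choose j * (m - j) :=
    Nat.choose_succ_right_eq m j
  refine Nat.le_of_mul_le_mul_right ?_ (Nat.succ_pos j)
  calc (m - k + 1) * m.choose j * (j + 1)
      = m.choose j * ((m - k + 1) * (j + 1)) := by ring
    _ ≤ m.choose j * ((m - j) * k) := by
        refine Nat.mul_le_mul_left _ (Nat.mul_le_mul ?_ ?_) <;> omega
    _ = k * (m.choose j * (m - j)) := by ring
    _ = k * (m.choose (j + 1) * (j + 1)) := by rw [h1]
    _ = k * m.choose (j + 1) * (j + 1) := by ring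

lemma choose_tail_bound (m k : ℕ) (hk : k ≤ m) :
    ∀ s, s ≤ k → (m - k + 1) ^ s * m.choose (k - s) ≤ k ^ s * m.choose k := by
  intro s
  induction s with
  | zero => simp
  | succ s ih =>
    intro hs
    have hks : k - (s + 1) + 1 = k - s := by omega
    have step : (m - k + 1) * m.choose (k - (s + 1)) ≤ k * m.choose (k - s) := by
      have h := choose_step m k (k - (s + 1)) (by omega) hk
      rwa [hks] at h
    calc (m - k + 1) ^ (s + 1) * m.choose (k - (s + 1))
        = (m - k + 1) ^ s * ((m - k + 1) * m.choose (k - (s + 1))) := by ring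
      _ ≤ (m - k + 1) ^ s * (k * m.choose (k - s)) := Nat.mul_le_mul_left _ step
      _ = k * ((m - k + 1) ^ s * m.choose (k - s)) := by ring
      _ ≤ k * (k ^ s * m.choose k) := Nat.mul_le_mul_left _ (ih (by omega))
      _ = k ^ (s + 1) * m.choose k := by ring

lemma hyp_sum_eq (p k : ℕ) (hk : k ≤ p) :
    ∑ s ∈ range (k + 1), k.choose s * (p - k).choose (k - s) = p.choose k := by
  have h := Nat.add_choose_eq k (p - k) k
  rw [Nat.add_sub_cancel' hk] at h
  rw [h, Finset.Nat.sum_antidiagonal_eq_sum_range_succ_mk]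

lemma geom_le_two {r : ℝ} (h0 : 0 ≤ r) (h2 : r ≤ 1 / 2) (n : ℕ) :
    ∑ i ∈ range n, r ^ i ≤ 2 := by
  induction n with
  | zero => simp
  | succ n ih =>
    rw [geom_sum_succ]
    have hs : 0 ≤ ∑ i ∈ range n, r ^ i := sum_nonneg fun i _ => pow_nonneg h0 i
    nlinarith


set_option maxHeartbeats 2000000 in
lemma core (δ ε : ℝ) (hδ1 : 0 < δ) (hδ2 : δ < 1 / 2) (hε1 : 0 ≤ ε) (hε2 : ε ≤ 1 / 2)
    (p K N : ℕ) (S : ℝ) (hS : 0 < S)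
    (hk : (K : ℝ) ≤ (p : ℝ) ^ ((1 : ℝ) / 2 - δ))
    (hC : Real.exp (4 / δ) ≤ (K : ℝ) / S ^ 2)
    (hn : (N : ℝ) ≤ nstar p K S)
    (h1 : (4 : ℝ) ≤ (p : ℝ) ^ ((1 : ℝ) / 2 + δ))
    (h2 : (4 : ℝ) ≤ (p : ℝ) ^ δ)
    (h3 : 1 ≤ p) :
    1 - 4 * (p : ℝ) ^ (-δ) ≤
      (∑ s ∈ range (K + 1), hypPMF p K s *
        (if (s : ℝ) ≤ ε * (K : ℝ) then (1 - (s : ℝ) / ((K : ℝ) + S ^ 2)) ^ (-(N : ℤ)) else 0)) ∧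
    (∑ s ∈ range (K + 1), hypPMF p K s *
        (if (s : ℝ) ≤ ε * (K : ℝ) then (1 - (s : ℝ) / ((K : ℝ) + S ^ 2)) ^ (-(N : ℤ)) else 0))
      ≤ 1 + 4 * (p : ℝ) ^ (-δ) := by
  have hp0 : (0 : ℝ) < p := by exact_mod_cast h3
  have hp1 : (1 : ℝ) ≤ p := by exact_mod_cast h3
  -- K ≥ 1
  have hK1 : 1 ≤ K := by
    rcases Nat.eq_zero_or_pos K with h | h
    · exfalso
      rw [h] at hC
      simp only [Nat.cast_zero, zero_div] at hC
      exact absurd hC (not_le.mpr (Real.exp_pos _))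
    · exact h
  have hK0 : (0 : ℝ) < K := by exact_mod_cast hK1
  have hK1' : (1 : ℝ) ≤ K := by exact_mod_cast hK1
  have hS2 : (0 : ℝ) < S ^ 2 := by positivity
  have hKS : (0 : ℝ) < (K : ℝ) + S ^ 2 := by positivity
  -- 4K ≤ p
  have h4K : 4 * (K : ℝ) ≤ p := by
    have hmul : 4 * (K : ℝ) ≤ (p : ℝ) ^ ((1 : ℝ) / 2 + δ) * (p : ℝ) ^ ((1 : ℝ) / 2 - δ) :=
      mul_le_mul h1 hk (by positivity) (by positivity)
    rwa [← Real.rpow_add hp0, show (1 : ℝ) / 2 + δ + (1 / 2 - δ) = 1 by ring,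
      Real.rpow_one] at hmul
  have h2Kp : 2 * K ≤ p := by
    have : 2 * (K : ℝ) ≤ p := by linarith
    exact_mod_cast this
  have hKp : K ≤ p := by omega
  have hKple : (K : ℝ) ≤ p := by exact_mod_cast hKp
  -- denominator
  set D : ℕ := p - 2 * K + 1 with hDdef
  have hD : (D : ℝ) = (p : ℝ) - 2 * K + 1 := by
    have : (D : ℝ) = ((p - 2 * K : ℕ) : ℝ) + 1 := by push_cast [hDdef]; ring
    rw [this, Nat.cast_sub h2Kp]; push_cast; ring
  have hDhalf : (p : ℝ) / 2 ≤ (D : ℝ) := by rw [hD]; linarith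
  have hD0 : (0 : ℝ) < D := by linarith
  set Q : ℝ := (K : ℝ) ^ 2 / D with hQdef
  have hQ0 : 0 ≤ Q := by positivity
  -- Q ≤ 2 p^{-2δ}
  have hK2 : (K : ℝ) ^ 2 ≤ (p : ℝ) ^ (1 - 2 * δ) := by
    have h := mul_le_mul hk hk (le_of_lt hK0) (by positivity)
    calc (K : ℝ) ^ 2 = (K : ℝ) * K := sq (K : ℝ) ▸ by ring
      _ ≤ (p : ℝ) ^ ((1 : ℝ) / 2 - δ) * (p : ℝ) ^ ((1 : ℝ) / 2 - δ) := h
      _ = (p : ℝ) ^ (1 - 2 * δ) := by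
          rw [← Real.rpow_add hp0]; ring_nf
  have hQle2 : Q ≤ 2 * (p : ℝ) ^ (-(2 * δ)) := by
    have hstep : Q ≤ (p : ℝ) ^ (1 - 2 * δ) / ((p : ℝ) / 2) := by
      rw [hQdef]
      exact div_le_div₀ (by positivity) hK2 (by positivity) hDhalf
    have hpow : (p : ℝ) ^ (-(2 * δ)) * (p : ℝ) ^ (1 : ℝ) = (p : ℝ) ^ (1 - 2 * δ) := by
      rw [← Real.rpow_add hp0]; ring_nf
    have heq : (p : ℝ) ^ (1 - 2 * δ) / ((p : ℝ) / 2) = 2 * (p : ℝ) ^ (-(2 * δ)) := by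
      rw [← hpow, Real.rpow_one]
      field_simp
    rw [heq] at hstep
    exact hstep
  set r : ℝ := 2 * (p : ℝ) ^ (-δ) with hrdef
  have hr0 : 0 ≤ r := by positivity
  have hr2 : r ≤ 1 / 2 := by
    have hpd : (0 : ℝ) < (p : ℝ) ^ δ := by positivity
    have : (p : ℝ) ^ (-δ) ≤ 1 / 4 := by
      rw [Real.rpow_neg (le_of_lt hp0)]
      rw [inv_le_iff_one_le_mul₀ hpd]
      linarith
    rw [hrdef]; linarith
  have hQr : Q ≤ r := by
    have hee : (p : ℝ) ^ (-(2 * δ)) ≤ (p : ℝ) ^ (-δ) :=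
      Real.rpow_le_rpow_of_exponent_le hp1 (by linarith)
    rw [hrdef]; linarith
  have hQpd : Q * (p : ℝ) ^ δ ≤ r := by
    have step : Q * (p : ℝ) ^ δ ≤ 2 * (p : ℝ) ^ (-(2 * δ)) * (p : ℝ) ^ δ :=
      mul_le_mul_of_nonneg_right hQle2 (by positivity)
    have heq2 : 2 * (p : ℝ) ^ (-(2 * δ)) * (p : ℝ) ^ δ = 2 * (p : ℝ) ^ (-δ) := by
      rw [mul_assoc, ← Real.rpow_add hp0, show -(2 * δ) + δ = -δ by ring]
    rw [hrdef]; linarith [heq2 ▸ step]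
  have hcp : (0 : ℝ) < p.choose K := by exact_mod_cast Nat.choose_pos hKp
  -- pmf bound
  have hpmf_le : ∀ s, 1 ≤ s → s ≤ K → hypPMF p K s ≤ Q ^ s := by
    intro s hs1 hsK
    have hKm : K ≤ p - K := by omega
    have hnat := choose_tail_bound (p - K) K hKm s hsK
    have hmk : p - K - K + 1 = D := by omega
    rw [hmk] at hnat
    have hb : (p - K).choose K ≤ p.choose K := Nat.choose_le_choose K (by omega)
    have hc : K.choose s ≤ K ^ s := Nat.choose_le_pow K s
    have hnat2 : D ^ s * (K.choose s * (p - K).choose (K - s)) ≤ K ^ s * K ^ s * p.choose K := by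
      calc D ^ s * (K.choose s * (p - K).choose (K - s))
          = K.choose s * (D ^ s * (p - K).choose (K - s)) := by ring
        _ ≤ K ^ s * (K ^ s * p.choose K) :=
            Nat.mul_le_mul hc (hnat.trans (Nat.mul_le_mul_left _ hb))
        _ = K ^ s * K ^ s * p.choose K := by ring
    have hreal : (D : ℝ) ^ s * ((K.choose s : ℝ) * ((p - K).choose (K - s) : ℝ)) ≤
        (K : ℝ) ^ s * (K : ℝ) ^ s * (p.choose K : ℝ) := by exact_mod_cast hnat2
    have hDs : (0 : ℝ) < (D : ℝ) ^ s := by positivity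
    unfold hypPMF
    rw [hQdef, div_pow, div_le_div_iff₀ hcp hDs]
    calc ((K.choose s : ℝ) * ((p - K).choose (K - s) : ℝ)) * (D : ℝ) ^ s
        = (D : ℝ) ^ s * ((K.choose s : ℝ) * ((p - K).choose (K - s) : ℝ)) := by ring
      _ ≤ (K : ℝ) ^ s * (K : ℝ) ^ s * (p.choose K : ℝ) := hreal
      _ = ((K : ℝ) ^ 2) ^ s * (p.choose K : ℝ) := by ring
  -- x ≤ 1/2 helper
  have hxhalf : ∀ s : ℕ, (s : ℝ) ≤ ε * K → (s : ℝ) / ((K : ℝ) + S ^ 2) ≤ 1 / 2 := by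
    intro s hsε
    have hεK : ε * K ≤ 1 / 2 * K := mul_le_mul_of_nonneg_right hε2 hK0.le
    rw [div_le_iff₀ hKS]
    linarith
  -- weight bound
  have hw : ∀ s : ℕ, (s : ℝ) ≤ ε * K →
      (1 - (s : ℝ) / ((K : ℝ) + S ^ 2)) ^ (-(N : ℤ)) ≤ ((p : ℝ) ^ δ) ^ s := by
    intro s hsε
    have hx0 : (0 : ℝ) ≤ (s : ℝ) / ((K : ℝ) + S ^ 2) := by positivity
    have hx2 := hxhalf s hsε
    set x : ℝ := (s : ℝ) / ((K : ℝ) + S ^ 2) with hxdef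
    have hbx : (0 : ℝ) < 1 - x := by linarith
    have hrwz : (1 - x) ^ (-(N : ℤ)) = ((1 - x)⁻¹) ^ N := by
      rw [zpow_neg, zpow_natCast, ← inv_pow]
    have hinv : (1 - x)⁻¹ ≤ Real.exp (2 * x) := by
      have ha : (1 - x)⁻¹ ≤ 1 + 2 * x := by
        rw [← one_div, div_le_iff₀ hbx]
        nlinarith [mul_nonneg hx0 (by linarith : (0:ℝ) ≤ 1 - 2 * x)]
      have hb2 := Real.add_one_le_exp (2 * x)
      linarith
    -- exponent bound
    have hM : 4 / δ ≤ Real.log (1 + (K : ℝ) / S ^ 2) := by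
      have h1' : Real.exp (4 / δ) ≤ 1 + (K : ℝ) / S ^ 2 := by
        have : (K : ℝ) / S ^ 2 ≤ 1 + (K : ℝ) / S ^ 2 := by linarith
        linarith [hC]
      calc 4 / δ = Real.log (Real.exp (4 / δ)) := (Real.log_exp _).symm
        _ ≤ Real.log (1 + (K : ℝ) / S ^ 2) := Real.log_le_log (Real.exp_pos _) h1'
    have hM0 : 0 < Real.log (1 + (K : ℝ) / S ^ 2) :=
      lt_of_lt_of_le (by positivity) hM
    have hL0 : 0 ≤ Real.log ((p : ℝ) / K) := by
      apply Real.log_nonneg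
      rw [le_div_iff₀ hK0]; linarith
    have hLp : Real.log ((p : ℝ) / K) ≤ Real.log p := by
      rw [Real.log_div (ne_of_gt hp0) (ne_of_gt hK0)]
      have := Real.log_nonneg hK1'
      linarith
    have hNx : (N : ℝ) * (2 * x) ≤ δ * s * Real.log p := by
      have hns : (N : ℝ) * (2 * x) ≤ nstar p K S * (2 * x) :=
        mul_le_mul_of_nonneg_right hn (by positivity)
      have e1 : nstar p K S * (2 * x) =
          (4 * (s : ℝ) * Real.log ((p : ℝ) / K) / Real.log (1 + (K : ℝ) / S ^ 2)) *
            ((K : ℝ) / ((K : ℝ) + S ^ 2)) := by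
        rw [hxdef]
        show (2 * (K : ℝ) * Real.log ((p : ℝ) / K) / Real.log (1 + (K : ℝ) / S ^ 2)) *
            (2 * ((s : ℝ) / ((K : ℝ) + S ^ 2))) = _
        field_simp
        ring
      have e2 : (K : ℝ) / ((K : ℝ) + S ^ 2) ≤ 1 := by
        rw [div_le_one hKS]; linarith
      have e3 : (0 : ℝ) ≤ 4 * (s : ℝ) * Real.log ((p : ℝ) / K) / Real.log (1 + (K : ℝ) / S ^ 2) := by
        positivity
      have e4 : nstar p K S * (2 * x) ≤
          4 * (s : ℝ) * Real.log ((p : ℝ) / K) / Real.log (1 + (K : ℝ) / S ^ 2) := by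
        rw [e1]
        exact mul_le_of_le_one_right e3 e2
      have e5 : 4 * (s : ℝ) * Real.log ((p : ℝ) / K) / Real.log (1 + (K : ℝ) / S ^ 2) ≤
          4 * (s : ℝ) * Real.log ((p : ℝ) / K) / (4 / δ) := by
        gcongr
      have e6 : 4 * (s : ℝ) * Real.log ((p : ℝ) / K) / (4 / δ) = δ * s * Real.log ((p : ℝ) / K) := by
        rw [div_div_eq_mul_div]; ring
      have e7 : δ * s * Real.log ((p : ℝ) / K) ≤ δ * s * Real.log p :=
        mul_le_mul_of_nonneg_left hLp (by positivity)
      linarith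
    calc (1 - x) ^ (-(N : ℤ)) = ((1 - x)⁻¹) ^ N := hrwz
      _ ≤ (Real.exp (2 * x)) ^ N := pow_le_pow_left₀ (by positivity) hinv N
      _ = Real.exp ((N : ℝ) * (2 * x)) := (Real.exp_nat_mul _ N).symm
      _ ≤ Real.exp (δ * s * Real.log p) := Real.exp_le_exp.mpr hNx
      _ = ((p : ℝ) ^ δ) ^ s := by
          rw [← Real.rpow_natCast ((p : ℝ) ^ δ) s, ← Real.rpow_mul hp0.le,
            Real.rpow_def_of_pos hp0]
          ring_nf
  -- nonnegativity of terms
  have hpmf_nonneg : ∀ s, 0 ≤ hypPMF p K s := fun s => by unfold hypPMF; positivity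
  have hf_nonneg : ∀ s : ℕ, 0 ≤ hypPMF p K s *
      (if (s : ℝ) ≤ ε * (K : ℝ) then (1 - (s : ℝ) / ((K : ℝ) + S ^ 2)) ^ (-(N : ℤ)) else 0) := by
    intro s
    by_cases hcase : (s : ℝ) ≤ ε * (K : ℝ)
    · rw [if_pos hcase]
      have hx2 := hxhalf s hcase
      have hb' : (0 : ℝ) ≤ 1 - (s : ℝ) / ((K : ℝ) + S ^ 2) := by linarith
      exact mul_nonneg (hpmf_nonneg s) (zpow_nonneg hb' _)
    · rw [if_neg hcase, mul_zero]
  have hterm : ∀ i ∈ range K, hypPMF p K (i + 1) *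
      (if ((i + 1 : ℕ) : ℝ) ≤ ε * (K : ℝ) then
        (1 - ((i + 1 : ℕ) : ℝ) / ((K : ℝ) + S ^ 2)) ^ (-(N : ℤ)) else 0) ≤ r ^ (i + 1) := by
    intro i hi
    rw [Finset.mem_range] at hi
    by_cases hcase : ((i + 1 : ℕ) : ℝ) ≤ ε * (K : ℝ)
    · rw [if_pos hcase]
      have h1' := hpmf_le (i + 1) (by omega) (by omega)
      have h2' := hw (i + 1) hcase
      have hx2 := hxhalf (i + 1) hcase
      have hwn : (0 : ℝ) ≤ (1 - ((i + 1 : ℕ) : ℝ) / ((K : ℝ) + S ^ 2)) ^ (-(N : ℤ)) :=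
        zpow_nonneg (by linarith) _
      calc hypPMF p K (i + 1) * (1 - ((i + 1 : ℕ) : ℝ) / ((K : ℝ) + S ^ 2)) ^ (-(N : ℤ))
          ≤ Q ^ (i + 1) * ((p : ℝ) ^ δ) ^ (i + 1) :=
            mul_le_mul h1' h2' hwn (pow_nonneg hQ0 _)
        _ = (Q * (p : ℝ) ^ δ) ^ (i + 1) := (mul_pow _ _ _).symm
        _ ≤ r ^ (i + 1) := pow_le_pow_left₀ (by positivity) hQpd _
    · rw [if_neg hcase, mul_zero]
      positivity
  have hpmfr : ∀ i ∈ range K, hypPMF p K (i + 1) ≤ r ^ (i + 1) := by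
    intro i hi
    rw [Finset.mem_range] at hi
    exact (hpmf_le (i + 1) (by omega) (by omega)).trans (pow_le_pow_left₀ hQ0 hQr _)
  have hgeom : ∑ i ∈ range K, r ^ (i + 1) ≤ 2 * r := by
    have he : ∑ i ∈ range K, r ^ (i + 1) = r * ∑ i ∈ range K, r ^ i := by
      rw [Finset.mul_sum]
      exact Finset.sum_congr rfl fun i _ => pow_succ' r i
    rw [he]
    have hg := geom_le_two hr0 hr2 K
    nlinarith
  have hsum1 : ∑ s ∈ range (K + 1), hypPMF p K s = 1 := by
    unfold hypPMF
    rw [← Finset.sum_div]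
    rw [show (∑ s ∈ range (K + 1), ((K.choose s : ℝ) * ((p - K).choose (K - s) : ℝ)))
        = (p.choose K : ℝ) by exact_mod_cast congrArg (Nat.cast : ℕ → ℝ) (hyp_sum_eq p K hKp)]
    exact div_self (ne_of_gt hcp)
  rw [Finset.sum_range_succ'] at hsum1
  have htp0 : 0 ≤ ∑ i ∈ range K, hypPMF p K (i + 1) :=
    Finset.sum_nonneg fun i _ => hpmf_nonneg _
  have htple : ∑ i ∈ range K, hypPMF p K (i + 1) ≤ 2 * r :=
    (Finset.sum_le_sum hpmfr).trans hgeom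
  have hpmf0low : 1 - 2 * r ≤ hypPMF p K 0 := by linarith
  have hpmf0up : hypPMF p K 0 ≤ 1 := by linarith
  have hzero : ((0 : ℕ) : ℝ) ≤ ε * (K : ℝ) := by simpa using mul_nonneg hε1 hK0.le
  have hf0 : hypPMF p K 0 *
      (if ((0 : ℕ) : ℝ) ≤ ε * (K : ℝ) then
        (1 - ((0 : ℕ) : ℝ) / ((K : ℝ) + S ^ 2)) ^ (-(N : ℤ)) else 0) = hypPMF p K 0 := by
    rw [if_pos hzero]
    norm_num
  have hdecomp : (∑ s ∈ range (K + 1), hypPMF p K s *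
      (if (s : ℝ) ≤ ε * (K : ℝ) then (1 - (s : ℝ) / ((K : ℝ) + S ^ 2)) ^ (-(N : ℤ)) else 0))
      = (∑ i ∈ range K, hypPMF p K (i + 1) *
          (if ((i + 1 : ℕ) : ℝ) ≤ ε * (K : ℝ) then
            (1 - ((i + 1 : ℕ) : ℝ) / ((K : ℝ) + S ^ 2)) ^ (-(N : ℤ)) else 0))
        + hypPMF p K 0 := by
    rw [Finset.sum_range_succ' (fun s => hypPMF p K s *
      (if (s : ℝ) ≤ ε * (K : ℝ) then (1 - (s : ℝ) / ((K : ℝ) + S ^ 2)) ^ (-(N : ℤ)) else 0)) K]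
    rw [hf0]
  have hT0 : 0 ≤ ∑ i ∈ range K, hypPMF p K (i + 1) *
      (if ((i + 1 : ℕ) : ℝ) ≤ ε * (K : ℝ) then
        (1 - ((i + 1 : ℕ) : ℝ) / ((K : ℝ) + S ^ 2)) ^ (-(N : ℤ)) else 0) :=
    Finset.sum_nonneg fun i _ => hf_nonneg (i + 1)
  have hTle : (∑ i ∈ range K, hypPMF p K (i + 1) *
      (if ((i + 1 : ℕ) : ℝ) ≤ ε * (K : ℝ) then
        (1 - ((i + 1 : ℕ) : ℝ) / ((K : ℝ) + S ^ 2)) ^ (-(N : ℤ)) else 0)) ≤ 2 * r :=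
    (Finset.sum_le_sum hterm).trans hgeom
  have hr4 : 2 * r = 4 * (p : ℝ) ^ (-δ) := by rw [hrdef]; ring
  rw [hdecomp]
  constructor
  · linarith
  · linarith



end HypAux

/-- Lemma `lmm:MGF_bound`, part 1: fix `δ ∈ (0,1/2)` and `ε ∈ [0,1/2]`.
There is `C(δ) > 0` such that along any sequence of instances indexed by `p → ∞` with
`k ≤ p^{1/2−δ}`, `k/σ² ≥ C(δ)` and `n ≤ n*`,
`E_{S~Hyp(p,k,k)}[(1 − S/(k+σ²))^{−n} 1{S ≤ εk}] = 1 + o(1)`. -/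

theorem hyp_moment_small_overlap
    (δ ε : ℝ) (hδ1 : 0 < δ) (hδ2 : δ < 1 / 2) (hε1 : 0 ≤ ε) (hε2 : ε ≤ 1 / 2) :
    ∃ C > 0, ∀ (k n : ℕ → ℕ) (σ : ℕ → ℝ),
      (∀ᶠ p : ℕ in atTop, 0 < σ p) →
      (∀ᶠ p : ℕ in atTop, (k p : ℝ) ≤ (p : ℝ) ^ ((1 : ℝ) / 2 - δ)) →
      (∀ᶠ p : ℕ in atTop, C ≤ (k p : ℝ) / σ p ^ 2) →
      (∀ᶠ p : ℕ in atTop, (n p : ℝ) ≤ nstar p (k p) (σ p)) →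
      Tendsto (fun p : ℕ =>
          ∑ s ∈ Finset.range (k p + 1),
            hypPMF p (k p) s *
              (if (s : ℝ) ≤ ε * (k p : ℝ) then
                (1 - (s : ℝ) / ((k p : ℝ) + σ p ^ 2)) ^ (-(n p : ℤ)) else 0))
        atTop (nhds 1) := by
  refine ⟨Real.exp (4 / δ), Real.exp_pos _, ?_⟩
  intro k n σ hσ hk hC hn
  have hrp : Tendsto (fun p : ℕ => (p : ℝ) ^ (-δ)) atTop (nhds 0) :=
    (tendsto_rpow_neg_atTop hδ1).comp tendsto_natCast_atTop_atTop
  have hlow : Tendsto (fun p : ℕ => 1 - 4 * (p : ℝ) ^ (-δ)) atTop (nhds 1) := by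
    have h4 := hrp.const_mul (4 : ℝ)
    have := (tendsto_const_nhds (x := (1 : ℝ)) (f := atTop (α := ℕ))).sub h4
    simpa using this
  have hhigh : Tendsto (fun p : ℕ => 1 + 4 * (p : ℝ) ^ (-δ)) atTop (nhds 1) := by
    have h4 := hrp.const_mul (4 : ℝ)
    have := (tendsto_const_nhds (x := (1 : ℝ)) (f := atTop (α := ℕ))).add h4
    simpa using this
  have e1 : ∀ᶠ p : ℕ in atTop, (4 : ℝ) ≤ (p : ℝ) ^ ((1 : ℝ) / 2 + δ) :=
    ((tendsto_rpow_atTop (by linarith)).comp tendsto_natCast_atTop_atTop).eventually_ge_atTop 4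
  have e2 : ∀ᶠ p : ℕ in atTop, (4 : ℝ) ≤ (p : ℝ) ^ δ :=
    ((tendsto_rpow_atTop hδ1).comp tendsto_natCast_atTop_atTop).eventually_ge_atTop 4
  have e3 : ∀ᶠ p : ℕ in atTop, 1 ≤ p := eventually_ge_atTop 1
  have key : ∀ᶠ p : ℕ in atTop,
      1 - 4 * (p : ℝ) ^ (-δ) ≤ (∑ s ∈ Finset.range (k p + 1), hypPMF p (k p) s *
        (if (s : ℝ) ≤ ε * (k p : ℝ) then
          (1 - (s : ℝ) / ((k p : ℝ) + σ p ^ 2)) ^ (-(n p : ℤ)) else 0)) ∧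
      (∑ s ∈ Finset.range (k p + 1), hypPMF p (k p) s *
        (if (s : ℝ) ≤ ε * (k p : ℝ) then
          (1 - (s : ℝ) / ((k p : ℝ) + σ p ^ 2)) ^ (-(n p : ℤ)) else 0))
        ≤ 1 + 4 * (p : ℝ) ^ (-δ) := by
    filter_upwards [hσ, hk, hC, hn, e1, e2, e3] with p hσp hkp hCp hnp h1p h2p h3p
    exact HypAux.core δ ε hδ1 hδ2 hε1 hε2 p (k p) (n p) (σ p) hσp hkp hCp hnp h1p h2p h3p
  exact tendsto_of_tendsto_of_tendsto_of_le_of_le' hlow hhigh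
    (key.mono fun p h => h.1) (key.mono fun p h => h.2)

end
end

section
/- There exists a universal constant C > 0 such that the following holds. Consider a sequence of instances indexed by p → ∞ with k = o(p), k/σ² ≥ C, and n ≤ n*. Set ε = log log(p/k)/(2·log(p/k)) and τ = k·(1 − 1/log²(1 + k/σ²)). Then E_{S ~ Hyp(p,k,k)}[ (1 − S/(k + σ²))^{−n} · 1{εk < S ≤ τ} ] = o(1) as p → ∞. -/
open Filter Real

noncomputable section

lemma choose_le_two_pow' (k s : ℕ) : k.choose s ≤ 2^k := by
  rcases le_or_gt s k with h | h
  · calc k.choose s ≤ ∑ i ∈ Finset.range (k+1), k.choose i :=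
        Finset.single_le_sum (fun i _ => Nat.zero_le _) (Finset.mem_range.2 (by omega))
      _ = 2^k := Nat.sum_range_choose k
  · rw [Nat.choose_eq_zero_of_lt h]; positivity

lemma choose_desc_bound (p k : ℕ) (hk : 2*k ≤ p) :
    ∀ s, s ≤ k → (p-k).choose (k-s) * (p-2*k+1)^s ≤ (p-k).choose k * k^s := by
  intro s
  induction s with
  | zero => simp
  | succ s ih =>
    intro hs
    have hs' : s ≤ k := by omega
    have key : (p-k).choose (k-(s+1)) * (p-2*k+1) ≤ (p-k).choose (k-s) * k := by
      have h1 : (p-k).choose (k-s-1+1) * (k-s-1+1) = (p-k).choose (k-s-1) * ((p-k) - (k-s-1)) :=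
        Nat.choose_succ_right_eq _ _
      have e1 : k-s-1+1 = k-s := by omega
      have e2 : (p-k) - (k-s-1) = p-2*k+s+1 := by omega
      have e3 : k-(s+1) = k-s-1 := by omega
      rw [e1, e2] at h1
      calc (p-k).choose (k-(s+1)) * (p-2*k+1)
          ≤ (p-k).choose (k-s-1) * (p-2*k+s+1) := by
            rw [e3]; exact Nat.mul_le_mul_left _ (by omega)
        _ = (p-k).choose (k-s) * (k-s) := h1.symm
        _ ≤ (p-k).choose (k-s) * k := Nat.mul_le_mul_left _ (by omega)
    calc (p-k).choose (k-(s+1)) * (p-2*k+1)^(s+1)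
        = ((p-k).choose (k-(s+1)) * (p-2*k+1)) * (p-2*k+1)^s := by ring
      _ ≤ ((p-k).choose (k-s) * k) * (p-2*k+1)^s := Nat.mul_le_mul_right _ key
      _ = ((p-k).choose (k-s) * (p-2*k+1)^s) * k := by ring
      _ ≤ ((p-k).choose k * k^s) * k := Nat.mul_le_mul_right _ (ih hs')
      _ = (p-k).choose k * k^(s+1) := by ring

lemma hypPMF_le (p k s : ℕ) (h1 : 1 ≤ k) (h4 : 4*k ≤ p) (hs : s ≤ k) :
    hypPMF p k s ≤ 2^k * (2*(k:ℝ)/p)^s := by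
  have hkp : k ≤ p := by omega
  have hpk0 : 0 < p.choose k := Nat.choose_pos hkp
  have hp0 : 0 < p := by omega
  have hQ : ((p-k).choose (k-s) : ℝ) ≤ (p.choose k : ℝ) * ((k:ℝ)/((p:ℝ)-2*k+1))^s := by
    have hnat : (p-k).choose (k-s) * (p-2*k+1)^s ≤ p.choose k * k^s := by
      calc (p-k).choose (k-s) * (p-2*k+1)^s ≤ (p-k).choose k * k^s :=
            choose_desc_bound p k (by omega) s hs
        _ ≤ p.choose k * k^s := Nat.mul_le_mul_right _ (Nat.choose_le_choose k (by omega))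
    have hcast : ((p-k).choose (k-s) : ℝ) * ((p:ℝ)-2*k+1)^s ≤ (p.choose k : ℝ) * (k:ℝ)^s := by
      have := Nat.cast_le (α := ℝ).2 hnat
      push_cast [Nat.cast_sub (show 2*k ≤ p by omega)] at this
      convert this using 2 <;> push_cast <;> ring
    have hpos : (0:ℝ) < (p:ℝ)-2*k+1 := by
      have : (4*k:ℝ) ≤ p := by exact_mod_cast h4
      have : (1:ℝ) ≤ k := by exact_mod_cast h1
      nlinarith
    have hpos' : (0:ℝ) < ((p:ℝ)-2*k+1)^s := by positivity
    rw [div_pow, ← mul_div_assoc, le_div_iff₀ hpos']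
    calc ((p-k).choose (k-s) : ℝ) * ((p:ℝ)-2*k+1)^s ≤ (p.choose k : ℝ) * (k:ℝ)^s := hcast
      _ = _ := by ring
  have hbase : (k:ℝ)/((p:ℝ)-2*k+1) ≤ 2*(k:ℝ)/p := by
    have hk1 : (1:ℝ) ≤ k := by exact_mod_cast h1
    have h4' : (4*k:ℝ) ≤ p := by exact_mod_cast h4
    rw [div_le_div_iff₀ (by nlinarith) (by positivity)]
    nlinarith
  have hbase0 : (0:ℝ) ≤ (k:ℝ)/((p:ℝ)-2*k+1) := by
    have hk1 : (1:ℝ) ≤ k := by exact_mod_cast h1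
    have h4' : (4*k:ℝ) ≤ p := by exact_mod_cast h4
    exact div_nonneg (Nat.cast_nonneg k) (by nlinarith)
  calc hypPMF p k s = (k.choose s : ℝ) * ((p-k).choose (k-s) : ℝ) / (p.choose k : ℝ) := by
        unfold hypPMF; push_cast; try ring
    _ ≤ (2^k : ℝ) * ((p.choose k : ℝ) * ((k:ℝ)/((p:ℝ)-2*k+1))^s) / (p.choose k : ℝ) := by
        gcongr <;> first
          | exact_mod_cast choose_le_two_pow' k s
          | exact hQ
    _ = (2^k : ℝ) * ((k:ℝ)/((p:ℝ)-2*k+1))^s := by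
        rw [mul_div_assoc, mul_comm ((p.choose k : ℝ)) _, mul_div_assoc,
          div_self (by exact_mod_cast hpk0.ne' : ((p.choose k:ℕ):ℝ) ≠ 0), mul_one]
    _ ≤ 2^k * (2*(k:ℝ)/p)^s := by
        apply mul_le_mul_of_nonneg_left _ (by positivity)
        exact pow_le_pow_left₀ hbase0 hbase s

lemma zpow_factor_le (x y : ℝ) (n : ℕ) (hx : 0 ≤ x) (hxy : x ≤ y) (hy1 : y < 1) (hy0 : 0 < y) :
    (1 - x) ^ (-(n:ℤ)) ≤ Real.exp ((n:ℝ) * (x/y) * (-Real.log (1-y))) := by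
  have hy1' : (0:ℝ) < 1 - y := by linarith
  have ht0 : 0 ≤ x/y := div_nonneg hx hy0.le
  have ht1 : x/y ≤ 1 := (div_le_one hy0).2 hxy
  have hber : (1-y) ^ (x/y : ℝ) ≤ 1 - x := by
    have h := rpow_one_add_le_one_add_mul_self (s := -y) (by linarith) ht0 ht1
    have : 1 + x/y * (-y) = 1 - x := by field_simp; ring
    rw [this] at h
    rwa [← sub_eq_add_neg] at h
  set a : ℝ := (1-y) ^ (x/y : ℝ) with ha
  have ha0 : 0 < a := Real.rpow_pos_of_pos hy1' _
  have hx1 : 0 < 1 - x := lt_of_lt_of_le ha0 hber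
  have hpow : a ^ n ≤ (1-x) ^ n := pow_le_pow_left₀ ha0.le hber n
  have hstep : (1 - x) ^ (-(n:ℤ)) = ((1-x)^n)⁻¹ := by
    rw [zpow_neg, zpow_natCast]
  rw [hstep]
  have h2 : ((1-x)^n)⁻¹ ≤ (a^n)⁻¹ :=
    inv_anti₀ (by positivity) hpow
  refine h2.trans (le_of_eq ?_)
  rw [ha, Real.rpow_def_of_pos hy1', ← Real.exp_nat_mul, ← Real.exp_neg]
  ring_nf

set_option maxHeartbeats 1000000

/-- Lemma `lmm:MGF_bound`, part 2: there is a universal `C > 0` such that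
along any sequence of instances indexed by `p → ∞` with `k = o(p)`, `k/σ² ≥ C` and `n ≤ n*`,
taking `ε = log log(p/k)/(2 log(p/k))` and `τ = k(1 − 1/log²(1+k/σ²))`,
`E_{S~Hyp(p,k,k)}[(1 − S/(k+σ²))^{−n} 1{εk < S ≤ τ}] = o(1)`. -/
theorem hyp_moment_intermediate_overlap :
    ∃ C > 0, ∀ (k n : ℕ → ℕ) (σ : ℕ → ℝ),
      (∀ᶠ p : ℕ in atTop, 0 < σ p) →
      (∀ᶠ p : ℕ in atTop, k p ≤ p) →
      Tendsto (fun p : ℕ => (k p : ℝ) / p) atTop (nhds 0) →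
      (∀ᶠ p : ℕ in atTop, C ≤ (k p : ℝ) / σ p ^ 2) →
      (∀ᶠ p : ℕ in atTop, (n p : ℝ) ≤ nstar p (k p) (σ p)) →
      Tendsto (fun p : ℕ =>
          ∑ s ∈ Finset.range (k p + 1),
            hypPMF p (k p) s *
              (if Real.log (Real.log ((p : ℝ) / (k p : ℝ))) /
                    (2 * Real.log ((p : ℝ) / (k p : ℝ))) * (k p : ℝ) < (s : ℝ) ∧
                  (s : ℝ) ≤ (k p : ℝ) *
                    (1 - 1 / (Real.log (1 + (k p : ℝ) / σ p ^ 2)) ^ 2) then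
                (1 - (s : ℝ) / ((k p : ℝ) + σ p ^ 2)) ^ (-(n p : ℤ)) else 0))
        atTop (nhds 0) := by
  refine ⟨Real.exp 10000, Real.exp_pos _, ?_⟩
  intro k n σ hσ hkp hko hC hn
  set E : ℝ := Real.exp (Real.exp 12) with hE
  have hEpos : 0 < E := Real.exp_pos _
  have hk1 : ∀ᶠ p : ℕ in atTop, 1 ≤ k p := by
    filter_upwards [hσ, hC] with p h1 h2
    by_contra h
    have hk0 : k p = 0 := by omega
    rw [hk0] at h2
    simp only [Nat.cast_zero, zero_div] at h2
    exact absurd h2 (not_le.2 (Real.exp_pos _))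
  have h8 : ∀ᶠ p : ℕ in atTop, (k p : ℝ) / p < 1/8 :=
    hko.eventually_lt_const (by norm_num)
  have hM : ∀ᶠ p : ℕ in atTop, (k p : ℝ) / p < E⁻¹ :=
    hko.eventually_lt_const (by positivity)
  set g : ℕ → ℝ := fun p => Real.exp (-Real.log (Real.log ((p:ℝ) / (k p : ℝ))) / 8) with hg
  have key : ∀ᶠ p : ℕ in atTop,
      (0 ≤ ∑ s ∈ Finset.range (k p + 1),
            hypPMF p (k p) s *
              (if Real.log (Real.log ((p : ℝ) / (k p : ℝ))) /
                    (2 * Real.log ((p : ℝ) / (k p : ℝ))) * (k p : ℝ) < (s : ℝ) ∧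
                  (s : ℝ) ≤ (k p : ℝ) *
                    (1 - 1 / (Real.log (1 + (k p : ℝ) / σ p ^ 2)) ^ 2) then
                (1 - (s : ℝ) / ((k p : ℝ) + σ p ^ 2)) ^ (-(n p : ℤ)) else 0)) ∧
      ((∑ s ∈ Finset.range (k p + 1),
            hypPMF p (k p) s *
              (if Real.log (Real.log ((p : ℝ) / (k p : ℝ))) /
                    (2 * Real.log ((p : ℝ) / (k p : ℝ))) * (k p : ℝ) < (s : ℝ) ∧
                  (s : ℝ) ≤ (k p : ℝ) *
                    (1 - 1 / (Real.log (1 + (k p : ℝ) / σ p ^ 2)) ^ 2) then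
                (1 - (s : ℝ) / ((k p : ℝ) + σ p ^ 2)) ^ (-(n p : ℤ)) else 0)) ≤ g p) := by
    filter_upwards [hσ, hkp, hC, hn, hk1, h8, hM] with p hσp hkpp hCp hnp hk1p h8p hMp
    set K : ℝ := (k p : ℝ) with hKdef
    set P : ℝ := (p : ℝ) with hPdef
    set S2 : ℝ := σ p ^ 2 with hS2def
    have hK1 : (1:ℝ) ≤ K := by rw [hKdef]; exact_mod_cast hk1p
    have hKpos : 0 < K := by linarith
    have hS2pos : 0 < S2 := by positivity
    have hPpos : (0:ℝ) < P := by
      have h1p : 1 ≤ p := le_trans hk1p hkpp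
      rw [hPdef]
      exact_mod_cast h1p
    have hp8 : 8 * K ≤ P := by
      have := (div_lt_iff₀ hPpos).1 h8p
      linarith
    have hrE : E < P / K := by
      have h1 : K < E⁻¹ * P := by
        have := (div_lt_iff₀ hPpos).1 hMp
        linarith
      rw [lt_div_iff₀ hKpos]
      calc E * K < E * (E⁻¹ * P) := mul_lt_mul_of_pos_left h1 hEpos
        _ = P := by field_simp
    set r : ℝ := P / K with hrdef
    have hrpos : 0 < r := by positivity
    set R : ℝ := Real.log r with hRdef
    have hR : Real.exp 12 ≤ R := by
      calc Real.exp 12 = Real.log E := (Real.log_exp _).symm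
        _ ≤ R := Real.log_le_log hEpos hrE.le
    have hRpos : 0 < R := lt_of_lt_of_le (Real.exp_pos _) hR
    set lr : ℝ := Real.log R with hlrdef
    have hlr : (12:ℝ) ≤ lr := by
      calc (12:ℝ) = Real.log (Real.exp 12) := (Real.log_exp _).symm
        _ ≤ lr := Real.log_le_log (Real.exp_pos _) hR
    have hlrpos : 0 < lr := by linarith
    set L : ℝ := Real.log (1 + K / S2) with hLdef
    have hL : (10000:ℝ) ≤ L := by
      calc (10000:ℝ) = Real.log (Real.exp 10000) := (Real.log_exp _).symm
        _ ≤ L := Real.log_le_log (Real.exp_pos _) (by linarith [hCp])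
    have hLpos : 0 < L := by linarith
    have hS2K : S2 ≤ K := by
      have h1 : (1:ℝ) ≤ K / S2 := le_trans (by linarith [Real.add_one_le_exp (10000:ℝ)]) hCp
      calc S2 = 1 * S2 := (one_mul _).symm
        _ ≤ (K/S2) * S2 := by gcongr
        _ = K := by field_simp
    have hlogL : 50 * Real.log L ≤ L := by
      have hs1 : Real.log L ≤ 2 * Real.sqrt L := by
        have h1 : Real.log (Real.sqrt L) ≤ Real.sqrt L - 1 :=
          Real.log_le_sub_one_of_pos (Real.sqrt_pos.2 hLpos)
        have h2 : Real.log (Real.sqrt L) = Real.log L / 2 := Real.log_sqrt hLpos.le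
        linarith [Real.sqrt_nonneg L]
      have hs2 : (100:ℝ) ≤ Real.sqrt L := by
        have h100 : (100:ℝ) = Real.sqrt (100^2) := by
          rw [Real.sqrt_sq (by norm_num : (0:ℝ) ≤ 100)]
        rw [h100]
        have : (100:ℝ)^2 = 10000 := by norm_num
        exact Real.sqrt_le_sqrt (by linarith)
      have hmul := mul_le_mul_of_nonneg_right hs2 (Real.sqrt_nonneg L)
      have hms : Real.sqrt L * Real.sqrt L = L := Real.mul_self_sqrt hLpos.le
      linarith
    set τ : ℝ := K * (1 - 1 / L^2) with hτdef
    have h2L : (2:ℝ) ≤ L := by linarith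
    have h4L : (4:ℝ) ≤ L^2 := by
      calc (4:ℝ) = 2^2 := by norm_num
        _ ≤ L^2 := pow_le_pow_left₀ (by norm_num) h2L 2
    have hL2 : (1:ℝ)/L^2 ≤ 1/4 :=
      one_div_le_one_div_of_le (by norm_num) h4L
    have hτK : K / 2 ≤ τ := by
      rw [hτdef]
      have h34 : (1:ℝ)/2 ≤ 1 - 1/L^2 := by linarith
      calc K/2 = K * (1/2) := by ring
        _ ≤ K * (1 - 1/L^2) := mul_le_mul_of_nonneg_left h34 hKpos.le
    have hτpos : 0 < τ := by linarith
    have hτlt : τ < K + S2 := by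
      have hτK' : τ < K := by
        rw [hτdef]
        have hpos : (0:ℝ) < 1/L^2 := by positivity
        calc K * (1 - 1/L^2) < K * 1 := by
              apply mul_lt_mul_of_pos_left _ hKpos
              linarith
          _ = K := mul_one K
      linarith
    have hKS2pos : 0 < K + S2 := by linarith
    set y : ℝ := τ / (K + S2) with hydef
    have hy0 : 0 < y := by positivity
    have hy1 : y < 1 := (div_lt_one hKS2pos).2 hτlt
    have h1y : 1 / (2 * L^2) ≤ 1 - y := by
      have hexp : 1 - y = (S2 + K / L^2) / (K + S2) := by
        rw [hydef, hτdef]; field_simp; ring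
      rw [hexp, div_le_div_iff₀ (by positivity) hKS2pos]
      have hexp2 : (S2 + K / L^2) * (2 * L^2) = 2 * L^2 * S2 + 2 * K := by
        field_simp
      have hnn : (0:ℝ) ≤ 2 * L^2 * S2 := by positivity
      linarith [hexp2, hnn, hS2K]
    have h1ypos : 0 < 1 - y := lt_of_lt_of_le (by positivity) h1y
    have hlogy : -Real.log (1 - y) ≤ 3 * Real.log L := by
      have h2 : (1-y)⁻¹ ≤ 2 * L^2 := by
        rw [inv_le_comm₀ h1ypos (by positivity)]
        calc (2*L^2)⁻¹ = 1/(2*L^2) := by rw [one_div]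
          _ ≤ 1 - y := h1y
      have h3 : 2 * L^2 ≤ L^3 := by
        calc 2 * L^2 ≤ L * L^2 := mul_le_mul_of_nonneg_right (by linarith) (by positivity)
          _ = L^3 := by ring
      have h4 : Real.log (L^3) = 3 * Real.log L := by
        rw [Real.log_pow]; push_cast; ring
      calc -Real.log (1-y) = Real.log ((1-y)⁻¹) := by rw [Real.log_inv]
        _ ≤ Real.log (L^3) := Real.log_le_log (by positivity) (h2.trans h3)
        _ = 3 * Real.log L := h4
    have hlogy0 : 0 ≤ -Real.log (1 - y) := by
      rw [neg_nonneg]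
      exact Real.log_nonpos (by linarith) (by linarith)
    have hn' : (n p : ℝ) ≤ 2 * K * R / L := by
      have hns : nstar p (k p) (σ p) = 2 * K * R / L := by
        rw [nstar, hRdef, hrdef, hLdef, hS2def]
      rw [hns] at hnp
      exact hnp
    have hlog2 : Real.log 2 < 0.6931471808 := Real.log_two_lt_d9
    have hlog2R : Real.log 2 ≤ R / 4 := by
      have h13 : (13:ℝ) ≤ Real.exp 12 := by linarith [Real.add_one_le_exp (12:ℝ)]
      linarith
    have h2pow : (2:ℝ)^(k p) = Real.exp (K * Real.log 2) := by
      rw [hKdef, Real.exp_nat_mul, Real.exp_log two_pos]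
    set M : ℝ := Real.exp (K * Real.log 2 - K * lr / 4) with hMdef
    have hterm : ∀ s ∈ Finset.range (k p + 1),
        hypPMF p (k p) s *
          (if lr / (2 * R) * K < (s : ℝ) ∧ (s:ℝ) ≤ τ then
            (1 - (s:ℝ) / (K + S2)) ^ (-(n p : ℤ)) else 0) ≤ M := by
      intro s hs
      have hsk : s ≤ k p := by
        simp only [Finset.mem_range] at hs; omega
      by_cases hcond : lr / (2 * R) * K < (s : ℝ) ∧ (s:ℝ) ≤ τ
      · rw [if_pos hcond]
        obtain ⟨hc1, hc2⟩ := hcond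
        have hsnn : (0:ℝ) ≤ s := Nat.cast_nonneg s
        have h4k : 4 * k p ≤ p := by
          have h4k' : ((4 * k p : ℕ) : ℝ) ≤ (p:ℝ) := by
            push_cast
            have h4K : (4:ℝ) * K ≤ P := by linarith
            rw [hKdef, hPdef] at h4K
            linarith
          exact_mod_cast h4k'
        have hpmf : hypPMF p (k p) s ≤ 2^(k p) * (2*K/P)^s :=
          hypPMF_le p (k p) s hk1p h4k hsk
        set x : ℝ := (s:ℝ) / (K + S2) with hxdef
        have hx0 : 0 ≤ x := by positivity
        have hxy : x ≤ y := by rw [hxdef, hydef]; gcongr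
        have hfac : (1 - x) ^ (-(n p:ℤ)) ≤
            Real.exp ((n p : ℝ) * (x/y) * (-Real.log (1-y))) :=
          zpow_factor_le x y (n p) hx0 hxy hy1 hy0
        have hxyval : x / y = (s:ℝ) / τ := by
          rw [hxdef, hydef, div_div_div_cancel_right₀ hKS2pos.ne']
        have hsτ : (s:ℝ)/τ ≤ 2*(s:ℝ)/K := by
          have h1 : (s:ℝ)/τ ≤ (s:ℝ)/(K/2) := by gcongr
          have h2 : (s:ℝ)/(K/2) = 2*(s:ℝ)/K := by field_simp
          linarith
        have hEbound : (n p : ℝ) * (x/y) * (-Real.log (1-y)) ≤ (s:ℝ) * R / 4 := by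
          rw [hxyval]
          have e1 : (n p:ℝ) * ((s:ℝ)/τ) ≤ (2*K*R/L) * (2*(s:ℝ)/K) :=
            mul_le_mul hn' hsτ (by positivity) (by positivity)
          have e2 : (n p:ℝ) * ((s:ℝ)/τ) * (-Real.log (1-y)) ≤
              (2*K*R/L) * (2*(s:ℝ)/K) * (3 * Real.log L) :=
            mul_le_mul e1 hlogy hlogy0 (by positivity)
          have e3 : (2*K*R/L) * (2*(s:ℝ)/K) * (3 * Real.log L)
              = 12 * (s:ℝ) * R * (Real.log L / L) := by
            field_simp; ring
          have e4 : 12 * (s:ℝ) * R * (Real.log L / L) ≤ 12 * (s:ℝ) * R * (1/50) := by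
            apply mul_le_mul_of_nonneg_left _ (by positivity)
            rw [div_le_div_iff₀ hLpos (by norm_num)]
            linarith
          have e5 : 12 * (s:ℝ) * R * (1/50) ≤ (s:ℝ) * R / 4 := by
            have hnn : (0:ℝ) ≤ (s:ℝ) * R := by positivity
            have he : 12 * (s:ℝ) * R * (1/50) = ((s:ℝ)*R) * (12/50) := by ring
            have he2 : (s:ℝ) * R / 4 = ((s:ℝ)*R) * (1/4) := by ring
            rw [he, he2]
            apply mul_le_mul_of_nonneg_left (by norm_num) hnn
          calc (n p:ℝ) * ((s:ℝ)/τ) * (-Real.log (1-y)) ≤ _ := e2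
            _ = _ := e3
            _ ≤ _ := e4
            _ ≤ _ := e5
        have hfac2 : (1 - x) ^ (-(n p:ℤ)) ≤ Real.exp ((s:ℝ) * R / 4) :=
          hfac.trans (Real.exp_le_exp.2 hEbound)
        have hfacpos : (0:ℝ) < (1 - x) ^ (-(n p:ℤ)) := by
          apply zpow_pos
          linarith [hxy, hy1]
        have hpmf0 : 0 ≤ hypPMF p (k p) s := by
          unfold hypPMF; positivity
        have hcomb : hypPMF p (k p) s * (1 - x) ^ (-(n p:ℤ)) ≤
            2^(k p) * (2*K/P)^s * Real.exp ((s:ℝ) * R / 4) :=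
          mul_le_mul hpmf hfac2 hfacpos.le (by positivity)
        refine hcomb.trans ?_
        have hbpos : (0:ℝ) < 2*K/P := by positivity
        have hlogb : Real.log (2*K/P) = Real.log 2 - R := by
          rw [Real.log_div (by positivity) hPpos.ne', Real.log_mul two_ne_zero hKpos.ne',
            hRdef, hrdef, Real.log_div hPpos.ne' hKpos.ne']
          ring
        have hexps : (2*K/P)^s = Real.exp ((s:ℝ) * Real.log (2*K/P)) := by
          rw [Real.exp_nat_mul, Real.exp_log hbpos]
        calc (2:ℝ)^(k p) * (2*K/P)^s * Real.exp ((s:ℝ) * R / 4)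
            = Real.exp (K * Real.log 2 + (s:ℝ) * Real.log (2*K/P) + (s:ℝ) * R / 4) := by
              rw [h2pow, hexps, ← Real.exp_add, ← Real.exp_add]
          _ ≤ M := by
              rw [hMdef, Real.exp_le_exp, hlogb]
              have hsR : lr * K / 2 ≤ (s:ℝ) * R := by
                have hmul := mul_le_mul_of_nonneg_right hc1.le hRpos.le
                have heq : lr / (2*R) * K * R = lr * K / 2 := by field_simp
                linarith
              have hslog2 : (s:ℝ) * Real.log 2 ≤ (s:ℝ) * (R/4) :=
                mul_le_mul_of_nonneg_left hlog2R hsnn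
              have hd1 : (s:ℝ) * (Real.log 2 - R) = (s:ℝ) * Real.log 2 - (s:ℝ) * R := by ring
              have hd2 : (s:ℝ) * (R/4) = ((s:ℝ) * R)/4 := by ring
              have hd3 : lr * K / 2 = K * lr / 2 := by ring
              linarith [hsR, hslog2, hd1, hd2, hd3]
      · rw [if_neg hcond, mul_zero]
        rw [hMdef]
        positivity
    constructor
    · apply Finset.sum_nonneg
      intro s hs
      apply mul_nonneg
      · unfold hypPMF; positivity
      · split_ifs with hcond
        · apply (zpow_pos _ _).le
          have hsτ : (s:ℝ) ≤ τ := hcond.2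
          have : (s:ℝ)/(K+S2) < 1 := by
            rw [div_lt_one hKS2pos]; linarith
          linarith
        · exact le_refl 0
    · have hsum : (∑ s ∈ Finset.range (k p + 1),
          hypPMF p (k p) s *
            (if lr / (2 * R) * K < (s : ℝ) ∧ (s:ℝ) ≤ τ then
              (1 - (s:ℝ) / (K + S2)) ^ (-(n p : ℤ)) else 0)) ≤ (k p + 1 : ℝ) * M := by
        have h := Finset.sum_le_card_nsmul (Finset.range (k p + 1)) _ M hterm
        rwa [Finset.card_range, nsmul_eq_mul, Nat.cast_add, Nat.cast_one] at h
      have hk2 : ((k p : ℝ) + 1) ≤ Real.exp (K * Real.log 2) := by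
        rw [← h2pow]
        have hnat : k p + 1 ≤ 2^(k p) := Nat.lt_two_pow_self (n := k p)
        have := (Nat.cast_le (α := ℝ)).2 hnat
        push_cast at this
        convert this using 2
      have hfinal : (k p + 1 : ℝ) * M ≤ g p := by
        have hstep : (k p + 1 : ℝ) * M ≤ Real.exp (K * Real.log 2) * M :=
          mul_le_mul_of_nonneg_right hk2 (Real.exp_pos _).le
        have hstep2 : Real.exp (K * Real.log 2) * M = Real.exp (2 * K * Real.log 2 - K * lr / 4) := by
          rw [hMdef, ← Real.exp_add]; ring_nf
        have hstep3 : Real.exp (2 * K * Real.log 2 - K * lr / 4) ≤ Real.exp (-lr / 8) := by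
          rw [Real.exp_le_exp]
          have ha : lr/8 ≤ lr/4 - 2 * Real.log 2 := by linarith
          have hb : lr/8 ≤ K * (lr/8) := le_mul_of_one_le_left (by positivity) hK1
          have hc : K * (lr/8) ≤ K * (lr/4 - 2 * Real.log 2) :=
            mul_le_mul_of_nonneg_left ha hKpos.le
          have hd : K * (lr/4 - 2 * Real.log 2) = K * lr / 4 - 2 * K * Real.log 2 := by ring
          have he : K * (lr/8) = K * lr / 8 := by ring
          linarith [hb, hc, hd, he]
        have hgp : g p = Real.exp (-lr / 8) := by
          rw [hg]
        calc (k p + 1 : ℝ) * M ≤ Real.exp (K * Real.log 2) * M := hstep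
          _ = _ := hstep2
          _ ≤ Real.exp (-lr / 8) := hstep3
          _ = g p := hgp.symm
      exact hsum.trans hfinal
  -- squeeze
  have hgt : Tendsto g atTop (nhds 0) := by
    have h1 : Tendsto (fun p : ℕ => (p:ℝ) / (k p : ℝ)) atTop atTop := by
      have hpos : ∀ᶠ p : ℕ in atTop, (k p : ℝ) / p ∈ Set.Ioi (0:ℝ) := by
        filter_upwards [hk1, hkp, eventually_gt_atTop 0] with p h1 h2 h3
        have : (0:ℝ) < p := by exact_mod_cast h3
        have : (0:ℝ) < (k p : ℝ) := by exact_mod_cast h1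
        exact Set.mem_Ioi.2 (by positivity)
      have h2 : Tendsto (fun p : ℕ => (k p : ℝ) / p) atTop (nhdsWithin 0 (Set.Ioi 0)) :=
        tendsto_nhdsWithin_iff.2 ⟨hko, hpos⟩
      have h3 := h2.inv_tendsto_nhdsGT_zero
      apply h3.congr'
      filter_upwards [hk1, eventually_gt_atTop 0] with p h1 h2
      simp only [Pi.inv_apply, inv_div]
    have h2 : Tendsto (fun p : ℕ => Real.log (Real.log ((p:ℝ) / (k p : ℝ)))) atTop atTop :=
      Real.tendsto_log_atTop.comp (Real.tendsto_log_atTop.comp h1)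
    have h3 : Tendsto (fun p : ℕ => -Real.log (Real.log ((p:ℝ) / (k p : ℝ))) / 8) atTop atBot := by
      apply Tendsto.atBot_div_const (by norm_num : (0:ℝ) < 8)
      exact tendsto_neg_atTop_atBot.comp h2
    rw [hg]
    exact Real.tendsto_exp_atBot.comp h3
  exact squeeze_zero' (key.mono fun p h => h.1) (key.mono fun p h => h.2) hgt

end
end
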